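/- arXiv:2402.15442 — 6 statements merged into one kernel-verified Lean document; each statement's English description precedes it below -/
import Mathlib

section
/- Let (M, d) be a pseudometric space, K a positive integer, and μ₁,…,μ_K ∈ M. Suppose μ* ∈ M is a minimizer over ν ∈ M of the quantity min over subsets I ⊆ {1,…,K} with |I| > K/2 of max_{j∈I} d(μ_j, ν). If there exists η ∈ M and a subset I ⊆ {1,…,K} with |I| > K/2 such that d(μ_j, η) ≤ t for all j ∈ I, then d(μ*, η) ≤ 2t. -/
open Finset

/-- The GROS objective: `ν ↦ min_{I ⊆ [K], |I| > K/2} max_{j ∈ I} d(μ_j, ν)`. -/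
noncomputable def grosObj {M : Type*} [PseudoMetricSpace M] (K : ℕ)
    (μs : Fin K → M) (ν : M) : ℝ :=
  ⨅ I : {I : Finset (Fin K) // K < 2 * I.card}, ⨆ j ∈ I.1, dist (μs j) ν

private lemma le_biSup_finset {K : ℕ} (g : Fin K → ℝ) {s : Finset (Fin K)} {j : Fin K}
    (hj : j ∈ s) : g j ≤ ⨆ i ∈ s, g i := by
  have h1 : g j = ⨆ _ : j ∈ s, g j := by
    haveI : Nonempty (j ∈ s) := ⟨hj⟩
    exact (ciSup_const).symm
  rw [h1]
  exact le_ciSup (f := fun i => ⨆ _ : i ∈ s, g i) (Set.Finite.bddAbove (Set.finite_range _)) j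

/-- If some η has more than K/2 of the μ_j within distance t, then any minimizer μ*
of the GROS objective satisfies d(μ*, η) ≤ 2t. -/
theorem stmt0 {M : Type*} [PseudoMetricSpace M] {K : ℕ} (hK : 0 < K)
    (μs : Fin K → M) (μstar : M)
    (hmin : ∀ ν : M, grosObj K μs μstar ≤ grosObj K μs ν)
    (η : M) (t : ℝ) (I : Finset (Fin K)) (hI : K < 2 * I.card)
    (ht : ∀ j ∈ I, dist (μs j) η ≤ t) :
    dist μstar η ≤ 2 * t := by
  -- t is nonnegative
  have hIne : I.Nonempty := Finset.card_pos.mp (by omega)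
  obtain ⟨j₁, hj₁⟩ := hIne
  have ht0 : 0 ≤ t := le_trans dist_nonneg (ht j₁ hj₁)
  -- the objective at η is at most t
  have hη : grosObj K μs η ≤ t := by
    refine le_trans (ciInf_le ?_ ⟨I, hI⟩) ?_
    · refine ⟨0, ?_⟩
      rintro x ⟨J, rfl⟩
      exact Real.iSup_nonneg fun i => Real.iSup_nonneg fun _ => dist_nonneg
    · exact Real.iSup_le (fun i => Real.iSup_le (fun hi => ht i hi) ht0) ht0
  -- the infimum defining the objective at μstar is attained
  haveI : Nonempty {J : Finset (Fin K) // K < 2 * J.card} := ⟨⟨I, hI⟩⟩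
  obtain ⟨x, hx⟩ := Finite.exists_min
    (fun J : {J : Finset (Fin K) // K < 2 * J.card} => ⨆ j ∈ J.1, dist (μs j) μstar)
  have hxle : (⨆ j ∈ x.1, dist (μs j) μstar) ≤ t :=
    le_trans (le_trans (le_ciInf hx) (hmin η)) hη
  -- intersection of x.1 and I is nonempty
  have hcard : (x.1 ∪ I).card ≤ K := by
    simpa using Finset.card_le_card (Finset.subset_univ (x.1 ∪ I))
  have hint : (x.1 ∩ I).Nonempty := by
    refine Finset.card_pos.mp ?_
    have := Finset.card_inter_add_card_union x.1 I
    have hx2 := x.2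
    omega
  obtain ⟨j₀, hj₀⟩ := hint
  have hj₀x : j₀ ∈ x.1 := (Finset.mem_inter.mp hj₀).1
  have hj₀I : j₀ ∈ I := (Finset.mem_inter.mp hj₀).2
  have h1 : dist (μs j₀) μstar ≤ t :=
    le_trans (le_biSup_finset (fun j => dist (μs j) μstar) hj₀x) hxle
  calc dist μstar η ≤ dist μstar (μs j₀) + dist (μs j₀) η := dist_triangle _ _ _
    _ ≤ t + t := add_le_add (by rw [dist_comm]; exact h1) (ht j₀ hj₀I)
    _ = 2 * t := by ring
end

section
/- Let (M, d) be a pseudometric space, K a positive integer, μ₁,…,μ_K ∈ M, and μ ∈ M. Let j* ∈ {1,…,K} be an index minimizing, over j ∈ {1,…,K}, the quantity min over subsets I ⊆ {1,…,K} with |I| > K/2 of max_{i∈I} d(μ_i, μ_j). If there exists a subset I ⊆ {1,…,K} with |I| > K/2 such that d(μ, μ_j) ≤ t for all j ∈ I, then d(μ_{j*}, μ) ≤ 3t. -/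
open Finset

/-- Practical GROS: if `j*` minimizes the GROS objective over the sample points
`μ_1,…,μ_K`, and more than K/2 of the `μ_j` are within `t` of `μ`, then
`d(μ_{j*}, μ) ≤ 3t`. -/
theorem stmt2 {M : Type*} [PseudoMetricSpace M] {K : ℕ} (hK : 0 < K)
    (μs : Fin K → M) (μ : M) (jstar : Fin K)
    (hmin : ∀ j : Fin K, grosObj K μs (μs jstar) ≤ grosObj K μs (μs j))
    (t : ℝ) (I : Finset (Fin K)) (hI : K < 2 * I.card)
    (ht : ∀ j ∈ I, dist μ (μs j) ≤ t) :
    dist (μs jstar) μ ≤ 3 * t := by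
  obtain ⟨j0, hj0⟩ : I.Nonempty := Finset.card_pos.mp (by omega)
  have ht0 : 0 ≤ t := le_trans dist_nonneg (ht j0 hj0)
  have hne : Nonempty {I : Finset (Fin K) // K < 2 * I.card} := ⟨⟨I, hI⟩⟩
  set F : {I : Finset (Fin K) // K < 2 * I.card} → ℝ :=
    fun I' => ⨆ j ∈ I'.1, dist (μs j) (μs jstar) with hF
  obtain ⟨I₀, hI₀⟩ := Finite.exists_min F
  have h1 : F I₀ ≤ 2 * t := by
    have h2 : F I₀ ≤ grosObj K μs (μs jstar) := by
      rw [grosObj]; exact le_ciInf hI₀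
    refine h2.trans ((hmin j0).trans ?_)
    have hbd : BddBelow (Set.range fun I' : {I : Finset (Fin K) // K < 2 * I.card} =>
        ⨆ j ∈ I'.1, dist (μs j) (μs j0)) := by
      refine ⟨0, ?_⟩
      rintro x ⟨I', rfl⟩
      exact Real.iSup_nonneg fun j => Real.iSup_nonneg fun _ => dist_nonneg
    have h3 : grosObj K μs (μs j0) ≤ ⨆ j ∈ I, dist (μs j) (μs j0) := by
      rw [grosObj]; exact ciInf_le hbd ⟨I, hI⟩
    refine h3.trans ?_
    refine Real.iSup_le (fun j => Real.iSup_le (fun hj => ?_) (by linarith)) (by linarith)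
    calc dist (μs j) (μs j0) ≤ dist (μs j) μ + dist μ (μs j0) := dist_triangle _ _ _
      _ ≤ t + t := add_le_add (by rw [dist_comm]; exact ht j hj) (ht j0 hj0)
      _ = 2 * t := by ring
  have hcard : 0 < (I ∩ I₀.1).card := by
    have h4 := Finset.card_inter_add_card_union I I₀.1
    have h5 : (I ∪ I₀.1).card ≤ K := by
      have := Finset.card_le_univ (I ∪ I₀.1)
      simpa using this
    have := I₀.2
    omega
  obtain ⟨j1, hj1⟩ := Finset.card_pos.mp hcard
  have hj1I : j1 ∈ I := (Finset.mem_inter.mp hj1).1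
  have hj1I0 : j1 ∈ I₀.1 := (Finset.mem_inter.mp hj1).2
  have h6 : dist (μs j1) (μs jstar) ≤ F I₀ := by
    have hb : BddAbove (Set.range fun j => ⨆ _ : j ∈ I₀.1, dist (μs j) (μs jstar)) :=
      Set.Finite.bddAbove (Set.finite_range _)
    have hb2 : BddAbove (Set.range fun _ : j1 ∈ I₀.1 => dist (μs j1) (μs jstar)) :=
      Set.Finite.bddAbove (Set.finite_range _)
    exact le_trans (le_ciSup hb2 hj1I0) (le_ciSup hb j1)
  calc dist (μs jstar) μ ≤ dist (μs jstar) (μs j1) + dist (μs j1) μ := dist_triangle _ _ _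
    _ ≤ 2 * t + t := add_le_add (by rw [dist_comm]; exact h6.trans h1)
        (by rw [dist_comm]; exact ht j1 hj1I)
    _ = 3 * t := by ring
end

section
/- Let (M, d) be a metric space, K a positive integer, μ₁,…,μ_K ∈ M, and η ∈ M. Let M̃ ⊆ M be a nonempty subset with inf_{ν∈M̃} d(η, ν) = ε. Suppose μ̃ ∈ M̃ minimizes over ν ∈ M̃ the quantity min over subsets I with |I| > K/2 of max_{j∈I} d(μ_j, ν). If there exists a subset I ⊆ {1,…,K} with |I| > K/2 such that d(μ_j, η) ≤ t for all j ∈ I, then d(μ̃, η) ≤ 2t + ε. -/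
open Finset

/-- Mis-specification lemma: if the minimization is carried out over a subset `M̃`
at distance `ε` from `η`, and more than K/2 of the `μ_j` are within `t` of `η`,
then the minimizer `μ̃ ∈ M̃` satisfies `d(μ̃, η) ≤ 2t + ε`. -/
theorem stmt3 {M : Type*} [MetricSpace M] {K : ℕ} (hK : 0 < K)
    (μs : Fin K → M) (η : M) (Mt : Set M) (hne : Mt.Nonempty)
    (ε : ℝ) (hε : Metric.infDist η Mt = ε)
    (μt : M) (hμt : μt ∈ Mt)
    (hmin : ∀ ν ∈ Mt, grosObj K μs μt ≤ grosObj K μs ν)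
    (t : ℝ) (I : Finset (Fin K)) (hI : K < 2 * I.card)
    (ht : ∀ j ∈ I, dist (μs j) η ≤ t) :
    dist μt η ≤ 2 * t + ε := by
  have hεnn : 0 ≤ ε := hε ▸ Metric.infDist_nonneg
  have hInem : I.Nonempty := Finset.card_pos.mp (by omega)
  have htnn : 0 ≤ t := le_trans dist_nonneg (ht _ hInem.choose_spec)
  have hsub : Nonempty {I : Finset (Fin K) // K < 2 * I.card} := ⟨⟨I, hI⟩⟩
  refine le_of_forall_pos_le_add fun δ hδ => ?_
  -- pick η_δ ∈ Mt with dist η η_δ < ε + δ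
  have hlt : Metric.infDist η Mt < ε + δ := by rw [hε]; linarith
  obtain ⟨ν, hνMt, hνd⟩ := (Metric.infDist_lt_iff hne).mp hlt
  -- the objective at ν is at most t + ε + δ
  have hobjν : grosObj K μs ν ≤ t + (ε + δ) := by
    refine le_trans (ciInf_le ?_ ⟨I, hI⟩) ?_
    · refine ⟨0, fun x hx => ?_⟩
      obtain ⟨J, rfl⟩ := hx
      obtain ⟨j, hj⟩ := Finset.card_pos.mp (by omega : 0 < J.1.card)
      calc (0 : ℝ) ≤ dist (μs j) ν := dist_nonneg
        _ = ⨆ _ : j ∈ J.1, dist (μs j) ν := (ciSup_pos (f := fun _ => dist (μs j) ν) hj).symm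
        _ ≤ ⨆ i ∈ J.1, dist (μs i) ν :=
            le_ciSup (f := fun i => ⨆ _ : i ∈ J.1, dist (μs i) ν) (Finite.bddAbove_range _) j
    · refine Real.iSup_le (fun j => Real.iSup_le (fun hj => ?_) (by linarith)) (by linarith)
      calc dist (μs j) ν ≤ dist (μs j) η + dist η ν := dist_triangle _ _ _
        _ ≤ t + (ε + δ) := add_le_add (ht j hj) hνd.le
  have hobjμt : grosObj K μs μt ≤ t + (ε + δ) := le_trans (hmin ν hνMt) hobjν
  -- the infimum at μt is attained at some I₀
  obtain ⟨I₀, hI₀min⟩ := Finite.exists_min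
    (fun J : {I : Finset (Fin K) // K < 2 * I.card} => ⨆ j ∈ J.1, dist (μs j) μt)
  have hattain : (⨆ j ∈ I₀.1, dist (μs j) μt) ≤ t + (ε + δ) :=
    le_trans (le_ciInf hI₀min) hobjμt
  -- I and I₀ intersect
  have hinter : (I ∩ I₀.1).Nonempty := by
    rw [← Finset.card_pos]
    have h1 := Finset.card_union_add_card_inter I I₀.1
    have h2 : (I ∪ I₀.1).card ≤ K := by
      simpa using Finset.card_le_univ (I ∪ I₀.1)
    have := I₀.2
    omega
  obtain ⟨j, hj⟩ := hinter
  have hjI : j ∈ I := (Finset.mem_inter.mp hj).1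
  have hjI₀ : j ∈ I₀.1 := (Finset.mem_inter.mp hj).2
  have hjd : dist (μs j) μt ≤ t + (ε + δ) := by
    refine le_trans ?_ hattain
    calc dist (μs j) μt = ⨆ _ : j ∈ I₀.1, dist (μs j) μt := (ciSup_pos (f := fun _ => dist (μs j) μt) hjI₀).symm
      _ ≤ ⨆ i ∈ I₀.1, dist (μs i) μt := le_ciSup (f := fun i => ⨆ _ : i ∈ I₀.1, dist (μs i) μt) (Finite.bddAbove_range _) j
  calc dist μt η ≤ dist μt (μs j) + dist (μs j) η := dist_triangle _ _ _
    _ = dist (μs j) μt + dist (μs j) η := by rw [dist_comm]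
    _ ≤ (t + (ε + δ)) + t := add_le_add hjd (ht j hjI)
    _ = 2 * t + ε + δ := by ring
end

section
/- Let (M, d) be a pseudometric space, K a positive integer, μ ∈ M a fixed point, and μ₁,…,μ_K independent, identically distributed M-valued random elements with E[d(μ₁, μ)²] < ∞. Let δ ∈ (0,1) and suppose K = ⌈8 log(1/δ)⌉. Let μ* be a random element of M that almost surely minimizes ν ↦ min_{I: |I|>K/2} max_{j∈I} d(μ_j, ν). Then P(d(μ*, μ) > 4·√(E[d(μ₁,μ)²])) ≤ δ. -/
/-!
By Chebyshev's inequality each `μ_k` lies farther than `2σ` from `μ` with probability at most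
`1/4`, so by Hoeffding's inequality at least half of them are that far only with probability
`exp(-K/8) ≤ δ`. Otherwise more than half of the `μ_k` lie within `2σ` of `μ`, so the objective
at `μ`, hence at its minimiser `μ*`, is at most `2σ`; a majority set witnessing the value at `μ*`
meets the good majority, and the triangle inequality through a common `μ_j` gives
`d(μ*, μ) ≤ 4σ`.
-/

open Finset MeasureTheory ProbabilityTheory

section Aggregation

variable {M : Type*} [PseudoMetricSpace M] {K : ℕ} (μs : Fin K → M)

lemma grosObj_le_of_forall_dist_le {ν : M} {I : Finset (Fin K)} (hI : K < 2 * #I) {r : ℝ}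
    (h : ∀ j ∈ I, dist (μs j) ν ≤ r) : grosObj K μs ν ≤ r := by
  obtain ⟨j, hj⟩ : I.Nonempty := card_pos.mp (by omega)
  -- needed because the inner `⨆` over `j ∉ I` is `sSup ∅ = 0`
  have hr : 0 ≤ r := dist_nonneg.trans (h j hj)
  exact (ciInf_le (Set.finite_range _).bddBelow ⟨I, hI⟩).trans
    (Real.iSup_le (fun j => Real.iSup_le (h j) hr) hr)

lemma exists_forall_dist_le_grosObj (hK : 0 < K) (ν : M) :
    ∃ I : Finset (Fin K), K < 2 * #I ∧ ∀ j ∈ I, dist (μs j) ν ≤ grosObj K μs ν := by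
  have : Nonempty {I : Finset (Fin K) // K < 2 * #I} :=
    ⟨⟨univ, by simp only [card_univ, Fintype.card_fin]; omega⟩⟩
  obtain ⟨I, hI⟩ := Finite.exists_min fun I : {I : Finset (Fin K) // K < 2 * #I} =>
    ⨆ j ∈ I.1, dist (μs j) ν
  refine ⟨I.1, I.2, fun j hj => ?_⟩
  have hmin : grosObj K μs ν = ⨆ j ∈ I.1, dist (μs j) ν :=
    le_antisymm (ciInf_le (Set.finite_range _).bddBelow I) (le_ciInf hI)
  rw [hmin]
  refine le_trans ?_ (le_ciSup (Set.finite_range _).bddAbove j)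
  exact (ciSup_pos (f := fun _ : j ∈ I.1 => dist (μs j) ν) hj).ge

lemma dist_le_of_grosObj_le {μ ν : M} {G : Finset (Fin K)} (hG : K < 2 * #G) {r : ℝ}
    (hGr : ∀ j ∈ G, dist (μs j) μ ≤ r) (hν : grosObj K μs ν ≤ grosObj K μs μ) :
    dist ν μ ≤ 2 * r := by
  have hGK : #G ≤ K := by simpa using card_le_univ G
  obtain ⟨I, hI, hIν⟩ := exists_forall_dist_le_grosObj μs (by omega) ν
  have hνr : grosObj K μs ν ≤ r := hν.trans (grosObj_le_of_forall_dist_le μs hG hGr)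
  have hunion : #(I ∪ G) ≤ K := by simpa using card_le_univ (I ∪ G)
  obtain ⟨j, hj⟩ : (I ∩ G).Nonempty := by
    rw [← card_pos]; have := card_union_add_card_inter I G; omega
  rw [mem_inter] at hj
  calc dist ν μ ≤ dist (μs j) ν + dist (μs j) μ := dist_triangle_left _ _ _
    _ ≤ r + r := add_le_add ((hIν j hj.1).trans hνr) (hGr j hj.2)
    _ = 2 * r := by ring

lemma dist_le_of_grosObj_le_of_two_mul_card_lt {μ ν : M} {r : ℝ}
    (hbad : 2 * #{k | r < dist (μs k) μ} < K) (hν : grosObj K μs ν ≤ grosObj K μs μ) :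
    dist ν μ ≤ 2 * r := by
  have hsplit := card_filter_add_card_filter_not (s := univ) fun k => r < dist (μs k) μ
  rw [card_univ, Fintype.card_fin] at hsplit
  exact dist_le_of_grosObj_le μs (G := {k | ¬r < dist (μs k) μ}) (by omega)
    (fun j hj => not_lt.mp (mem_filter.mp hj).2) hν

end Aggregation

section Concentration

variable {Ω : Type*} [MeasurableSpace Ω] {μ : Measure Ω}

lemma measureReal_mul_sqrt_integral_sq_lt_le [IsFiniteMeasure μ] {f : Ω → ℝ}
    (hf : Integrable (fun ω => f ω ^ 2) μ) {c : ℝ} (hc : 0 < c) :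
    μ.real {ω | c * √(∫ ω, f ω ^ 2 ∂μ) < f ω} ≤ (c ^ 2)⁻¹ := by
  set m := ∫ ω, f ω ^ 2 ∂μ
  have hm : 0 ≤ m := integral_nonneg fun ω => sq_nonneg _
  rcases hm.eq_or_lt with hm0 | hmpos
  · have hf0 : (fun ω => f ω ^ 2) =ᵐ[μ] 0 :=
      (integral_eq_zero_iff_of_nonneg (fun ω => sq_nonneg _) hf).mp hm0.symm
    have hnull : μ.real {ω | c * √m < f ω} = 0 := by
      refine (measureReal_eq_zero_iff).mpr (measure_eq_zero_iff_ae_notMem.mpr ?_)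
      filter_upwards [hf0] with ω hω
      simp [← hm0, pow_eq_zero_iff two_ne_zero |>.mp hω]
    rw [hnull]; positivity
  · have hsub : {ω | c * √m < f ω} ⊆ {ω | c ^ 2 * m ≤ f ω ^ 2} := fun ω hω => by
      have : c ^ 2 * m = (c * √m) ^ 2 := by rw [mul_pow, Real.sq_sqrt hm]
      rw [Set.mem_ofPred_eq, this]
      exact pow_le_pow_left₀ (by positivity) (le_of_lt hω) 2
    have hmarkov : c ^ 2 * m * μ.real {ω | c ^ 2 * m ≤ f ω ^ 2} ≤ m :=
      mul_meas_ge_le_integral_of_nonneg (ae_of_all _ fun ω => sq_nonneg (f ω)) hf _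
    have hmono : μ.real {ω | c * √m < f ω} ≤ μ.real {ω | c ^ 2 * m ≤ f ω ^ 2} :=
      measureReal_mono hsub
    rw [← one_div, le_div_iff₀ (by positivity)]
    nlinarith [mul_le_mul_of_nonneg_left hmono (by positivity : 0 ≤ c ^ 2 * m)]

lemma measureReal_sum_integral_add_le_sum_le [IsProbabilityMeasure μ] {ι : Type*} [Fintype ι]
    {X : ι → Ω → ℝ} (hind : iIndepFun X μ) (hm : ∀ i, AEMeasurable (X i) μ)
    (hX : ∀ i, ∀ᵐ ω ∂μ, X i ω ∈ Set.Icc 0 1) {ε : ℝ} (hε : 0 ≤ ε) :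
    μ.real {ω | ∑ i, μ[X i] + ε ≤ ∑ i, X i ω} ≤ Real.exp (-2 * ε ^ 2 / Fintype.card ι) := by
  have hcent : iIndepFun (fun i ω => X i ω - μ[X i]) μ :=
    hind.comp (fun i (x : ℝ) => x - ∫ ω, X i ω ∂μ) fun _ => measurable_id.sub_const _
  have h := HasSubgaussianMGF.measure_sum_ge_le_of_iIndepFun hcent (s := univ)
    (fun i _ => hasSubgaussianMGF_of_mem_Icc (hm i) (hX i)) hε
  convert h using 2
  · ext ω; simp only [Set.mem_ofPred_eq, sum_sub_distrib]; exact le_sub_iff_add_le'.symm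
  · simp only [neg_mul, sub_zero, nnnorm_one, one_div, inv_pow, sum_const, card_univ,
      nsmul_eq_mul, NNReal.coe_mul, NNReal.coe_natCast, NNReal.coe_inv, NNReal.coe_pow,
      NNReal.coe_ofNat]
    ring

lemma measureReal_card_mul_add_le_card_le [IsProbabilityMeasure μ] {ι β : Type*} [Fintype ι]
    [MeasurableSpace β] {Z : ι → Ω → β} (hZ : ∀ i, Measurable (Z i)) (hind : iIndepFun Z μ)
    {B : Set β} [DecidablePred (· ∈ B)] (hB : MeasurableSet B) {p : ℝ}
    (hp : ∀ i, μ.real (Z i ⁻¹' B) ≤ p) {ε : ℝ} (hε : 0 ≤ ε) :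
    μ.real {ω | Fintype.card ι * p + ε ≤ #{i | Z i ω ∈ B}} ≤
      Real.exp (-2 * ε ^ 2 / Fintype.card ι) := by
  set X : ι → Ω → ℝ := fun i ω => B.indicator (fun _ => 1) (Z i ω)
  have hXm : ∀ i, Measurable (X i) := fun i => (measurable_const.indicator hB).comp (hZ i)
  have hmean : ∀ i, μ[X i] = μ.real (Z i ⁻¹' B) := fun i =>
    integral_indicator_one ((hZ i) hB)
  have hcount : ∀ ω, ∑ i, X i ω = #{i | Z i ω ∈ B} := fun ω => by
    simp [X, Set.indicator_apply]
  refine (measureReal_mono fun ω hω => ?_).trans (measureReal_sum_integral_add_le_sum_le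
    (hind.comp _ fun _ => measurable_const.indicator hB) (fun i => (hXm i).aemeasurable)
    (fun i => ae_of_all _ fun ω => ?_) hε)
  · change ∑ i, μ[X i] + ε ≤ ∑ i, X i ω
    have hsum : ∑ i, μ[X i] ≤ Fintype.card ι * p := by
      simpa [hmean] using sum_le_sum fun i (_ : i ∈ univ) => hp i
    rw [hcount]
    exact (add_le_add_left hsum ε).trans hω
  · by_cases h : Z i ω ∈ B <;> simp [h]

end Concentration

theorem stmt7_general {Ω M : Type*} [MeasureSpace Ω] [IsProbabilityMeasure (ℙ : Measure Ω)]
    [PseudoMetricSpace M] [MeasurableSpace M] [BorelSpace M]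
    (δ : ℝ) (hδ : δ ∈ Set.Ioo (0 : ℝ) 1)
    (K : ℕ) (hKδ : K = ⌈8 * Real.log (1 / δ)⌉₊) (hKpos : 0 < K)
    (μ0 : M) (μs : Fin K → Ω → M) (hmeas : ∀ k, Measurable (μs k))
    (hind : iIndepFun μs ℙ)
    (hident : ∀ k, IdentDistrib (μs k) (μs ⟨0, hKpos⟩) ℙ ℙ)
    (hint : Integrable (fun ω => dist (μs ⟨0, hKpos⟩ ω) μ0 ^ 2) ℙ)
    (μstar : Ω → M)
    (hmin : ∀ᵐ ω ∂ℙ, ∀ ν : M,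
      grosObj K (fun k => μs k ω) (μstar ω) ≤ grosObj K (fun k => μs k ω) ν) :
    ℙ {ω | 4 * Real.sqrt (∫ ω', dist (μs ⟨0, hKpos⟩ ω') μ0 ^ 2 ∂ℙ) <
        dist (μstar ω) μ0} ≤ ENNReal.ofReal δ := by
  classical
  set σ := √(∫ ω, dist (μs ⟨0, hKpos⟩ ω) μ0 ^ 2 ∂ℙ)
  set B : Set M := {x | 2 * σ < dist x μ0}
  have hB : MeasurableSet B :=
    measurableSet_lt measurable_const (continuous_id.dist continuous_const).measurable
  have hbad : ∀ k, (ℙ : Measure Ω).real (μs k ⁻¹' B) ≤ 1 / 4 := fun k => by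
    rw [measureReal_def, (hident k).measure_mem_eq hB, ← measureReal_def]
    exact (measureReal_mul_sqrt_integral_sq_lt_le hint two_pos).trans_eq (by norm_num)
  have hconc := measureReal_card_mul_add_le_card_le hmeas hind hB hbad
    (by positivity : (0 : ℝ) ≤ K / 4)
  rw [Fintype.card_fin] at hconc
  have hexp : Real.exp (-2 * (K / 4 : ℝ) ^ 2 / K) ≤ δ := by
    have hK : 8 * Real.log (1 / δ) ≤ K := hKδ ▸ Nat.le_ceil _
    calc Real.exp (-2 * (K / 4 : ℝ) ^ 2 / K) = Real.exp (-(K / 8)) := by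
          congr 1; field_simp; ring
      _ ≤ Real.exp (-Real.log (1 / δ)) := Real.exp_le_exp.mpr (by linarith)
      _ = δ := by rw [one_div, Real.log_inv, neg_neg, Real.exp_log hδ.1]
  have hsub : ∀ᵐ ω ∂ℙ, 4 * σ < dist (μstar ω) μ0 →
      K * (1 / 4 : ℝ) + K / 4 ≤ #{k | μs k ω ∈ B} := by
    filter_upwards [hmin] with ω hω hfar
    by_contra! hfew
    have hbad_minority : 2 * #{k | 2 * σ < dist (μs k ω) μ0} < K := by
      have : (2 * #{k | μs k ω ∈ B} : ℝ) < K := by linarith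
      exact_mod_cast this
    have := dist_le_of_grosObj_le_of_two_mul_card_lt (fun k => μs k ω) hbad_minority (hω μ0)
    linarith
  calc ℙ {ω | 4 * σ < dist (μstar ω) μ0}
      ≤ ℙ {ω | K * (1 / 4 : ℝ) + K / 4 ≤ #{k | μs k ω ∈ B}} := measure_mono_ae hsub
    _ ≤ ENNReal.ofReal δ := by
        rw [← ofReal_measureReal]
        exact ENNReal.ofReal_le_ofReal (hconc.trans hexp)

/-- Sub-Gaussian aggregation (Theorem 2.1): with `K = ⌈8 log(1/δ)⌉` i.i.d.
estimators with finite second moment of `d(μ₁, μ)`, the GROS aggregate `μ*`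
satisfies `P(d(μ*, μ) > 4√(E[d(μ₁,μ)²])) ≤ δ`. -/
theorem stmt7 {Ω M : Type*} [MeasureSpace Ω] [IsProbabilityMeasure (ℙ : Measure Ω)]
    [PseudoMetricSpace M] [MeasurableSpace M] [BorelSpace M]
    (δ : ℝ) (hδ : δ ∈ Set.Ioo (0 : ℝ) 1)
    (K : ℕ) (hKδ : K = ⌈8 * Real.log (1 / δ)⌉₊) (hKpos : 0 < K)
    (μ0 : M) (μs : Fin K → Ω → M) (hmeas : ∀ k, Measurable (μs k))
    (hind : iIndepFun μs ℙ)
    (hident : ∀ k, IdentDistrib (μs k) (μs ⟨0, hKpos⟩) ℙ ℙ)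
    (hint : Integrable (fun ω => dist (μs ⟨0, hKpos⟩ ω) μ0 ^ 2) ℙ)
    (μstar : Ω → M) (hμstar : Measurable μstar)
    (hmin : ∀ᵐ ω ∂ℙ, ∀ ν : M,
      grosObj K (fun k => μs k ω) (μstar ω) ≤ grosObj K (fun k => μs k ω) ν) :
    ℙ {ω | 4 * Real.sqrt (∫ ω', dist (μs ⟨0, hKpos⟩ ω') μ0 ^ 2 ∂ℙ) <
        dist (μstar ω) μ0} ≤ ENNReal.ofReal δ :=
  stmt7_general δ hδ K hKδ hKpos μ0 μs hmeas hind hident hint μstar hmin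
end

section
/- Let K and n be positive integers with K ≤ n, and consider the GROS estimator on a dataset of size n partitioned into K groups: the estimator is a function of the K group estimates via μ* = argmin_ν min_{I:|I|>K/2} max_{j∈I} d(μ_j, ν). If fewer than ⌈K/2⌉ of the group estimates are replaced by arbitrary points of M while the remaining group estimates stay within distance t of a fixed η ∈ M, then d(μ*, η) ≤ 2t; in particular, the output remains bounded (Donoho breakdown point at least ⌈K/2⌉/n, interpreting each corrupted data point as corrupting at most one group). -/
open Finset

/-- Breakdown-point core (Donoho breakdown point `⌈K/2⌉/n`): if a set `G` of
"good" group indices with `|G| ≥ K − ⌈K/2⌉ + 1` (equivalently `|G| > K/2`) has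
all its estimates within `t` of `η`, then — no matter how the remaining (fewer
than `⌈K/2⌉`) group estimates are corrupted — any GROS minimizer `μ*` satisfies
`d(μ*, η) ≤ 2t`; in particular the output remains bounded. -/
theorem stmt17 {M : Type*} [PseudoMetricSpace M] {K n : ℕ}
    (hK : 0 < K) (hKn : K ≤ n)
    (μs : Fin K → M) (η : M) (t : ℝ)
    (G : Finset (Fin K)) (hG : K - (K + 1) / 2 + 1 ≤ G.card)
    (hgood : ∀ j ∈ G, dist (μs j) η ≤ t)
    (μstar : M)
    (hmin : ∀ ν : M, grosObj K μs μstar ≤ grosObj K μs ν) :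
    dist μstar η ≤ 2 * t := by
  have hGcard : K < 2 * G.card := by omega
  have hGne : G.Nonempty := Finset.card_pos.mp (by omega)
  have htnn : 0 ≤ t := by
    obtain ⟨j, hj⟩ := hGne
    exact le_trans dist_nonneg (hgood j hj)
  have hne : Nonempty {I : Finset (Fin K) // K < 2 * I.card} :=
    ⟨⟨Finset.univ, by simp [Finset.card_fin]; omega⟩⟩
  have hbdd : BddBelow (Set.range fun I : {I : Finset (Fin K) // K < 2 * I.card} =>
      ⨆ j ∈ I.1, dist (μs j) η) := by
    refine ⟨0, ?_⟩
    rintro x ⟨I, rfl⟩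
    exact Real.iSup_nonneg fun j => Real.iSup_nonneg fun _ => dist_nonneg
  have hobjη : grosObj K μs η ≤ t := by
    refine ciInf_le_of_le hbdd ⟨G, hGcard⟩ ?_
    refine Real.iSup_le (fun j => Real.iSup_le (fun hj => hgood j hj) htnn) htnn
  have hstar : grosObj K μs μstar ≤ t := le_trans (hmin η) hobjη
  have key : ∀ ε : ℝ, 0 < ε → dist μstar η ≤ 2 * t + ε := by
    intro ε hε
    have hlt : grosObj K μs μstar < t + ε := lt_of_le_of_lt hstar (by linarith)
    obtain ⟨I, hI⟩ := exists_lt_of_ciInf_lt hlt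
    have hinter : (I.1 ∩ G).Nonempty := by
      rw [← Finset.card_pos]
      have h1 := Finset.card_union_add_card_inter I.1 G
      have h2 : (I.1 ∪ G).card ≤ K := by
        simpa using Finset.card_le_univ (I.1 ∪ G)
      have h3 := I.2
      omega
    obtain ⟨j, hj⟩ := hinter
    have hjI : j ∈ I.1 := (Finset.mem_inter.mp hj).1
    have hjG : j ∈ G := (Finset.mem_inter.mp hj).2
    have h4 : dist (μs j) μstar ≤ ⨆ k ∈ I.1, dist (μs k) μstar := by
      have h5 := le_ciSup (f := fun k => ⨆ _ : k ∈ I.1, dist (μs k) μstar)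
        (Set.Finite.bddAbove (Set.finite_range _)) j
      rwa [ciSup_pos hjI] at h5
    have h6 : dist (μs j) μstar < t + ε := lt_of_le_of_lt h4 hI
    have h7 := hgood j hjG
    have h8 := dist_triangle μstar (μs j) η
    rw [dist_comm μstar (μs j)] at h8
    linarith
  exact le_of_forall_pos_le_add key
end

section
/- Let (M, d) be a pseudometric space, K a positive integer, q ∈ [1/2, 1), and μ₁,…,μ_K ∈ M. Suppose μ*_q minimizes ν ↦ min_{I: |I| > Kq} max_{j∈I} d(μ_j, ν) over ν ∈ M. If there exist η ∈ M and I ⊆ {1,…,K} with |I| > Kq such that d(μ_j, η) ≤ t for all j ∈ I, then d(μ*_q, η) ≤ 2t. -/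
open Finset

/-- The quantile-`q` GROS objective:
`ν ↦ min_{I ⊆ [K], |I| > Kq} max_{j ∈ I} d(μ_j, ν)`. -/
noncomputable def grosObjQ {M : Type*} [PseudoMetricSpace M] (K : ℕ) (q : ℝ)
    (μs : Fin K → M) (ν : M) : ℝ :=
  ⨅ I : {I : Finset (Fin K) // (K : ℝ) * q < I.card}, ⨆ j ∈ I.1, dist (μs j) ν

/-- Quantile generalization of the aggregation lemma: for `q ∈ [1/2, 1)`, if
more than `Kq` of the `μ_j` are within `t` of `η`, then any minimizer `μ*_q` of
the quantile-`q` GROS objective satisfies `d(μ*_q, η) ≤ 2t`. -/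
theorem stmt18 {M : Type*} [PseudoMetricSpace M] {K : ℕ} (hK : 0 < K)
    (q : ℝ) (hq : q ∈ Set.Ico (1 / 2 : ℝ) 1)
    (μs : Fin K → M) (μstarq : M)
    (hmin : ∀ ν : M, grosObjQ K q μs μstarq ≤ grosObjQ K q μs ν)
    (η : M) (t : ℝ) (I : Finset (Fin K)) (hI : (K : ℝ) * q < I.card)
    (ht : ∀ j ∈ I, dist (μs j) η ≤ t) :
    dist μstarq η ≤ 2 * t := by
  obtain ⟨hq1, hq2⟩ := hq
  have hKpos : (0 : ℝ) < K := by exact_mod_cast hK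
  have hKq : (0 : ℝ) < K * q := by positivity
  -- I is nonempty
  have hIne : I.Nonempty := by
    rw [← Finset.card_pos]
    have : (0 : ℝ) < I.card := lt_trans hKq hI
    exact_mod_cast this
  have ht0 : 0 ≤ t := le_trans dist_nonneg (ht _ hIne.choose_spec)
  haveI : Nonempty (Fin K) := ⟨⟨0, hK⟩⟩
  have hne : Nonempty {J : Finset (Fin K) // (K : ℝ) * q < J.card} := ⟨⟨I, hI⟩⟩
  -- boundedness helpers
  have hbdd : ∀ (ν : M) (J : Finset (Fin K)),
      BddAbove (Set.range fun j : Fin K => ⨆ _ : j ∈ J, dist (μs j) ν) :=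
    fun ν J => (Set.finite_range _).bddAbove
  have hsup_le : ∀ (ν : M) (J : Finset (Fin K)) (a : ℝ), 0 ≤ a →
      (∀ j ∈ J, dist (μs j) ν ≤ a) → (⨆ j ∈ J, dist (μs j) ν) ≤ a := by
    intro ν J a ha h
    refine ciSup_le fun j => Real.iSup_le (fun hj => h j hj) ha
  have hle_sup : ∀ (ν : M) (J : Finset (Fin K)), ∀ j ∈ J,
      dist (μs j) ν ≤ ⨆ j ∈ J, dist (μs j) ν := by
    intro ν J j hj
    have h1 : dist (μs j) ν ≤ ⨆ _ : j ∈ J, dist (μs j) ν := by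
      haveI : Nonempty (j ∈ J) := ⟨hj⟩
      rw [ciSup_const]
    exact h1.trans (le_ciSup (hbdd ν J) j)
  have hbddB : BddBelow (Set.range fun J : {J : Finset (Fin K) // (K : ℝ) * q < J.card} =>
      ⨆ j ∈ J.1, dist (μs j) η) := (Set.finite_range _).bddBelow
  -- obj η ≤ t
  have hobjη : grosObjQ K q μs η ≤ t := by
    unfold grosObjQ
    have h1 := ciInf_le hbddB ⟨I, hI⟩
    have h2 := hsup_le η I t ht0 ht
    exact le_trans h1 h2
  have hobj : grosObjQ K q μs μstarq ≤ t := (hmin η).trans hobjη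
  -- the infimum for μstarq is attained
  obtain ⟨I₀, hI₀min⟩ := Finite.exists_min
    (fun J : {J : Finset (Fin K) // (K : ℝ) * q < J.card} => ⨆ j ∈ J.1, dist (μs j) μstarq)
  have hattain : (⨆ j ∈ I₀.1, dist (μs j) μstarq) ≤ t := by
    refine le_trans ?_ hobj
    have : grosObjQ K q μs μstarq = ⨆ j ∈ I₀.1, dist (μs j) μstarq := by
      unfold grosObjQ
      refine le_antisymm (ciInf_le ((Set.finite_range _).bddBelow) I₀) (le_ciInf hI₀min)
    exact this.ge
  -- I₀ ∩ I nonempty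
  have hcard : K < I₀.1.card + I.card := by
    have h1 : (K : ℝ) < I₀.1.card + I.card := by
      have := I₀.2
      nlinarith
    exact_mod_cast h1
  have hinter : (I₀.1 ∩ I).Nonempty := by
    rw [← Finset.card_pos]
    have hu : (I₀.1 ∪ I).card ≤ K := by
      simpa using Finset.card_le_card (Finset.subset_univ (I₀.1 ∪ I))
    have := Finset.card_union_add_card_inter I₀.1 I
    omega
  obtain ⟨j, hj⟩ := hinter
  rw [Finset.mem_inter] at hj
  calc dist μstarq η ≤ dist μstarq (μs j) + dist (μs j) η := dist_triangle _ _ _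
    _ ≤ t + t := by
        refine add_le_add ?_ (ht j hj.2)
        rw [dist_comm]
        exact (hle_sup μstarq I₀.1 j hj.1).trans hattain
    _ = 2 * t := by ring
end
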